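/- arXiv:math/0404450 — 5 statements merged into one kernel-verified Lean document; each statement's English description precedes it below -/
import Mathlib

section
/- Let f : ℝ → ℝ be continuous with |f(u)| ≤ C(1 + |u|^{p-1}) for all u (with C > 0, p > 2), |f(u)| ≤ ε(|u|) with ε(t)/t → 0 as t → 0 (i.e. f(u) = o(|u|) as u → 0), and 0 < q·F(u) ≤ u·f(u) for u ≠ 0 with q > 2. Then there exists a constant C' > 0 such that |f(u)|² ≤ C'·u·f(u) whenever |u| ≤ 1. -/
theorem stmt_1 (f : ℝ → ℝ) (hf : Continuous f)
    (C p : ℝ) (hC : 0 < C) (hp : 2 < p)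
    (hgrowth : ∀ u : ℝ, |f u| ≤ C * (1 + |u| ^ (p - 1)))
    (hsmall : Filter.Tendsto (fun u : ℝ => |f u| / |u|) (nhdsWithin 0 {0}ᶜ) (nhds 0))
    (F : ℝ → ℝ) (hF : ∀ u, F u = ∫ s in (0:ℝ)..u, f s)
    (q : ℝ) (hq : 2 < q)
    (hAR : ∀ u : ℝ, u ≠ 0 → 0 < q * F u ∧ q * F u ≤ u * f u) :
    ∃ C' > 0, ∀ u : ℝ, |u| ≤ 1 → |f u| ^ 2 ≤ C' * (u * f u) := by
  -- f 0 = 0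
  have hf0 : f 0 = 0 := by
    have habs : Filter.Tendsto (fun u : ℝ => |u|) (nhdsWithin (0:ℝ) {0}ᶜ) (nhds 0) := by
      simpa using (continuous_abs.tendsto (0:ℝ)).mono_left nhdsWithin_le_nhds
    have h2 : Filter.Tendsto (fun u : ℝ => |f u| / |u| * |u|)
        (nhdsWithin (0:ℝ) {0}ᶜ) (nhds 0) := by
      simpa using hsmall.mul habs
    have heq : (fun u : ℝ => |f u| / |u| * |u|) =ᶠ[nhdsWithin (0:ℝ) {0}ᶜ]
        (fun u : ℝ => |f u|) := by
      filter_upwards [self_mem_nhdsWithin] with u hu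
      have : |u| ≠ 0 := abs_ne_zero.mpr hu
      field_simp
    have h1 : Filter.Tendsto (fun u : ℝ => |f u|) (nhdsWithin (0:ℝ) {0}ᶜ) (nhds 0) :=
      Filter.Tendsto.congr' heq h2
    have h3 : Filter.Tendsto (fun u : ℝ => |f u|) (nhdsWithin (0:ℝ) {0}ᶜ) (nhds |f 0|) :=
      ((continuous_abs.comp hf).tendsto 0).mono_left nhdsWithin_le_nhds
    have := tendsto_nhds_unique h3 h1
    simpa [abs_eq_zero] using this
  -- get δ from hsmall
  have hev : ∀ᶠ u in nhdsWithin (0:ℝ) {0}ᶜ, |f u| / |u| < 1 :=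
    hsmall.eventually (eventually_lt_nhds zero_lt_one)
  obtain ⟨δ, hδ, hδprop⟩ := Metric.mem_nhdsWithin_iff.mp hev
  refine ⟨max 1 (2 * C / δ), lt_of_lt_of_le zero_lt_one (le_max_left _ _), fun u hu1 => ?_⟩
  by_cases hu : u = 0
  · simp [hu, hf0]
  · have hARu := hAR u hu
    have hpos : 0 < u * f u := lt_of_lt_of_le hARu.1 hARu.2
    have habsmul : u * f u = |u| * |f u| := by
      rw [← abs_mul]; exact (abs_of_pos hpos).symm
    have hupos : 0 < |u| := abs_pos.mpr hu
    have hb : |f u| ≤ max 1 (2 * C / δ) * |u| := by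
      rcases lt_or_ge (|u|) δ with h | h
      · have hmem : u ∈ Metric.ball (0:ℝ) δ ∩ {0}ᶜ :=
          ⟨by simpa [Real.dist_eq] using h, hu⟩
        have := hδprop hmem
        have h1 : |f u| ≤ |u| := le_of_lt ((div_lt_one hupos).mp this)
        calc |f u| ≤ 1 * |u| := by linarith
          _ ≤ max 1 (2 * C / δ) * |u| :=
            mul_le_mul_of_nonneg_right (le_max_left _ _) (abs_nonneg u)
      · have hpow : |u| ^ (p - 1) ≤ 1 :=
          Real.rpow_le_one (abs_nonneg u) hu1 (by linarith)
        have h1 : |f u| ≤ 2 * C := by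
          have := hgrowth u
          nlinarith
        have h2 : 2 * C ≤ 2 * C / δ * |u| := by
          rw [div_mul_eq_mul_div, le_div_iff₀ hδ]
          nlinarith
        calc |f u| ≤ 2 * C / δ * |u| := le_trans h1 h2
          _ ≤ max 1 (2 * C / δ) * |u| :=
            mul_le_mul_of_nonneg_right (le_max_right _ _) (abs_nonneg u)
    rw [habsmul, ← mul_assoc, mul_comm (max 1 (2 * C / δ)) (|u|), mul_assoc]
    have : |f u| ^ 2 = |f u| * |f u| := sq (|f u|) ▸ rfl
    nlinarith [abs_nonneg (f u), mul_le_mul_of_nonneg_right hb (abs_nonneg (f u))]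
end

section
/- Let f : ℝ → ℝ be continuous satisfying |f(u)| ≤ C(1 + |u|^{p-1}) for all u with C > 0 and 2 < p, and 0 < q·F(u) ≤ u·f(u) for all u ≠ 0 with q > 2. Let p' = p/(p-1) be the conjugate exponent. Then there exists a constant C'' > 0 such that |f(u)|^{p'} ≤ C''·u·f(u) whenever |u| ≥ 1. -/
/-!
For `|u| ≥ 1` the growth bound gives `|f u| ≤ 2C |u|^(p-1)`. Since `p' - 1 = 1/(p-1)`, raising this
to the power `p' - 1` yields `|f u|^(p'-1) ≤ (2C)^(p'-1) |u|`, and multiplying by `|f u|` gives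
`|f u|^p' ≤ (2C)^(p'-1) |u| |f u|`. Finally `|u| |f u| = u f u` because `u f u ≥ q F u > 0`.
-/

open Real

lemma le_two_mul_rpow_of_le_mul_one_add_rpow {x y C r : ℝ} (hx : 1 ≤ x) (hC : 0 ≤ C)
    (hr : 0 ≤ r) (hy : y ≤ C * (1 + x ^ r)) : y ≤ 2 * C * x ^ r := by
  have : 1 ≤ x ^ r := one_le_rpow hx hr
  nlinarith

lemma sub_one_mul_conj_sub_one {p : ℝ} (hp : 1 < p) : (p - 1) * (p / (p - 1) - 1) = 1 := by
  have : p - 1 ≠ 0 := by linarith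
  field_simp
  ring

lemma rpow_conj_le_of_le_mul_rpow_sub_one {x y K p : ℝ} (hp : 1 < p) (hx : 0 ≤ x) (hy : 0 ≤ y)
    (hK : 0 ≤ K) (hyx : y ≤ K * x ^ (p - 1)) :
    y ^ (p / (p - 1)) ≤ K ^ (p / (p - 1) - 1) * (x * y) := by
  set s := p / (p - 1) - 1
  have hs : 0 < s := by
    have := sub_one_mul_conj_sub_one hp
    by_contra! h
    nlinarith
  have hys : y ^ s ≤ K ^ s * x :=
    calc y ^ s ≤ (K * x ^ (p - 1)) ^ s := rpow_le_rpow hy hyx hs.le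
      _ = K ^ s * (x ^ (p - 1)) ^ s := mul_rpow hK (by positivity)
      _ = K ^ s * x := by rw [← rpow_mul hx, sub_one_mul_conj_sub_one hp, rpow_one]
  calc y ^ (p / (p - 1)) = y ^ (s + 1) := by rw [sub_add_cancel]
    _ = y ^ s * y := rpow_add_one' hy (by linarith)
    _ ≤ K ^ s * x * y := mul_le_mul_of_nonneg_right hys hy
    _ = K ^ s * (x * y) := mul_assoc _ _ _

theorem stmt_2_general (f : ℝ → ℝ)
    (C p : ℝ) (hC : 0 < C) (hp : 2 < p)
    (hgrowth : ∀ u : ℝ, |f u| ≤ C * (1 + |u| ^ (p - 1)))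
    (F : ℝ → ℝ)
    (q : ℝ)
    (hAR : ∀ u : ℝ, u ≠ 0 → 0 < q * F u ∧ q * F u ≤ u * f u)
    (p' : ℝ) (hp' : p' = p / (p - 1)) :
    ∃ C'' > 0, ∀ u : ℝ, 1 ≤ |u| → |f u| ^ p' ≤ C'' * (u * f u) := by
  refine ⟨(2 * C) ^ (p' - 1), by positivity, fun u hu => ?_⟩
  have hu0 : u ≠ 0 := abs_pos.mp (by linarith)
  have huf : 0 < u * f u := (hAR u hu0).1.trans_le (hAR u hu0).2
  have hbound : |f u| ≤ 2 * C * |u| ^ (p - 1) :=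
    le_two_mul_rpow_of_le_mul_one_add_rpow hu hC.le (by linarith) (hgrowth u)
  have habs : |u| * |f u| = u * f u := by rw [← abs_mul, abs_of_pos huf]
  subst hp'
  simpa only [habs] using
    rpow_conj_le_of_le_mul_rpow_sub_one (by linarith) (abs_nonneg u) (abs_nonneg (f u))
      (by positivity) hbound

theorem stmt_2 (f : ℝ → ℝ) (hf : Continuous f)
    (C p : ℝ) (hC : 0 < C) (hp : 2 < p)
    (hgrowth : ∀ u : ℝ, |f u| ≤ C * (1 + |u| ^ (p - 1)))
    (F : ℝ → ℝ) (hF : ∀ u, F u = ∫ s in (0:ℝ)..u, f s)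
    (q : ℝ) (hq : 2 < q)
    (hAR : ∀ u : ℝ, u ≠ 0 → 0 < q * F u ∧ q * F u ≤ u * f u)
    (p' : ℝ) (hp' : p' = p / (p - 1)) :
    ∃ C'' > 0, ∀ u : ℝ, 1 ≤ |u| → |f u| ^ p' ≤ C'' * (u * f u) :=
  stmt_2_general f C p hC hp hgrowth F q hAR p' hp'
end

section
/- Let f : ℝ → ℝ be continuous with f(u) = o(|u|) as u → 0, and suppose 0 < q·F(u) ≤ u·f(u) for all u ≠ 0 with q > 2, where F(u) = ∫₀ᵘ f(s) ds. Then for every ε > 0 there exists C_ε > 0 such that F(u) ≥ -ε|u|² + C_ε|u|^q for all u ∈ ℝ. -/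
/-!
The Ambrosetti–Rabinowitz inequality `q F(t) ≤ t f(t)` says exactly that `t ↦ F(t) t^(-q)` is
nondecreasing on `[1, ∞)` (and, after reflecting, that `t ↦ F(-t) t^(-q)` is), so
`F(u) ≥ min (F 1) (F (-1)) |u|^q` for `|u| ≥ 1`. Since `F ≥ 0` and `|u|^q ≤ |u|^2` for `|u| ≤ 1`,
any `C ≤ min ε (min (F 1) (F (-1)))` works.
-/

open Real Set

theorem hasDerivAt_mul_rpow_neg {F : ℝ → ℝ} {f t : ℝ} (hF : HasDerivAt F f t) (q : ℝ)
    (ht : 0 < t) :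
    HasDerivAt (fun s => F s * s ^ (-q)) ((t * f - q * F t) * t ^ (-q - 1)) t := by
  have hpow : t ^ (-q) = t * t ^ (-q - 1) := by
    conv_lhs => rw [show -q = 1 + (-q - 1) by ring, rpow_add ht, rpow_one]
  refine (hF.mul (hasDerivAt_rpow_const (p := -q) (Or.inl ht.ne'))).congr_deriv ?_
  rw [hpow]
  ring

theorem apply_one_mul_rpow_le_of_le_mul_deriv {F f : ℝ → ℝ} {q : ℝ}
    (hF : ∀ t, 1 ≤ t → HasDerivAt F (f t) t) (hAR : ∀ t, 1 ≤ t → q * F t ≤ t * f t)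
    {u : ℝ} (hu : 1 ≤ u) :
    F 1 * u ^ q ≤ F u := by
  have hmono : MonotoneOn (fun s => F s * s ^ (-q)) (Ici 1) := by
    have hderiv : ∀ t ∈ Ici (1 : ℝ), HasDerivAt (fun s => F s * s ^ (-q))
        ((t * f t - q * F t) * t ^ (-q - 1)) t := fun t ht =>
      hasDerivAt_mul_rpow_neg (hF t ht) q (one_pos.trans_le ht)
    refine monotoneOn_of_hasDerivWithinAt_nonneg (convex_Ici 1)
      (fun t ht => (hderiv t ht).continuousAt.continuousWithinAt)
      (fun t ht => (hderiv t (interior_subset ht)).hasDerivWithinAt) fun t ht => ?_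
    rw [interior_Ici] at ht
    exact mul_nonneg (sub_nonneg.2 (hAR t ht.le)) (rpow_nonneg (one_pos.trans ht).le _)
  have hu0 : 0 < u := one_pos.trans_le hu
  calc F 1 * u ^ q = F 1 * 1 ^ (-q) * u ^ q := by rw [one_rpow, mul_one]
    _ ≤ F u * u ^ (-q) * u ^ q :=
        mul_le_mul_of_nonneg_right (hmono self_mem_Ici hu hu) (rpow_nonneg hu0.le q)
    _ = F u := by rw [mul_assoc, ← rpow_add hu0, neg_add_cancel, rpow_zero, mul_one]

theorem exists_pos_mul_abs_rpow_le_of_le_mul_deriv {F f : ℝ → ℝ} {q : ℝ}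
    (hF : ∀ t, HasDerivAt F (f t) t) (hAR : ∀ t, t ≠ 0 → q * F t ≤ t * f t)
    (hF₁ : 0 < F 1) (hFneg : 0 < F (-1)) :
    ∃ c > 0, ∀ u, 1 ≤ |u| → c * |u| ^ q ≤ F u := by
  have hright : ∀ u, 1 ≤ u → F 1 * u ^ q ≤ F u := fun u hu =>
    apply_one_mul_rpow_le_of_le_mul_deriv (fun t _ => hF t)
      (fun t ht => hAR t (by linarith)) hu
  have hleft : ∀ u, 1 ≤ u → F (-1) * u ^ q ≤ F (-u) := fun u hu =>
    apply_one_mul_rpow_le_of_le_mul_deriv (F := fun t => F (-t)) (f := fun t => -f (-t))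
      (fun t _ => ((hF (-t)).comp t (hasDerivAt_neg t)).congr_deriv (by ring))
      (fun t ht => by simpa using hAR (-t) (by linarith)) hu
  refine ⟨min (F 1) (F (-1)), lt_min hF₁ hFneg, fun u hu => ?_⟩
  have hpow : 0 ≤ |u| ^ q := rpow_nonneg (abs_nonneg u) q
  rcases le_or_gt 0 u with h0 | h0
  · rw [abs_of_nonneg h0] at hu hpow ⊢
    exact (mul_le_mul_of_nonneg_right (min_le_left _ _) hpow).trans (hright u hu)
  · rw [abs_of_neg h0] at hu hpow ⊢
    simpa using (mul_le_mul_of_nonneg_right (min_le_right _ _) hpow).trans (hleft (-u) hu)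

theorem exists_neg_mul_sq_add_mul_rpow_le {F : ℝ → ℝ} {q c : ℝ} (hq : 2 ≤ q)
    (hF : ∀ u, 0 ≤ F u) (hc : ∀ u, 1 ≤ |u| → c * |u| ^ q ≤ F u) (hc₀ : 0 < c)
    {ε : ℝ} (hε : 0 < ε) :
    ∃ C > 0, ∀ u, -ε * |u| ^ 2 + C * |u| ^ q ≤ F u := by
  refine ⟨min ε c, lt_min hε hc₀, fun u => ?_⟩
  have hpow : 0 ≤ |u| ^ q := rpow_nonneg (abs_nonneg u) q
  rcases le_total |u| 1 with hu | hu
  · have hq2 : |u| ^ q ≤ |u| ^ 2 := by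
      rw [← rpow_two]
      exact rpow_le_rpow_of_exponent_ge' (abs_nonneg u) hu zero_le_two hq
    nlinarith [min_le_left ε c, hF u]
  · nlinarith [min_le_right ε c, hc u hu, sq_nonneg |u|]

theorem stmt_5_general (f : ℝ → ℝ) (hf : Continuous f)
    (F : ℝ → ℝ) (hF : ∀ u, F u = ∫ s in (0:ℝ)..u, f s)
    (q : ℝ) (hq : 2 < q)
    (hAR : ∀ u : ℝ, u ≠ 0 → 0 < q * F u ∧ q * F u ≤ u * f u) :
    ∀ ε > (0:ℝ), ∃ Cε > (0:ℝ), ∀ u : ℝ,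
      F u ≥ -ε * |u| ^ 2 + Cε * |u| ^ q := by
  intro ε hε
  have hq₀ : 0 < q := by linarith
  have hderiv : ∀ t, HasDerivAt F (f t) t := fun t => by
    rw [funext hF]
    exact (hf.integral_hasStrictDerivAt 0 t).hasDerivAt
  have hpos : ∀ u, u ≠ 0 → 0 < F u := fun u hu => pos_of_mul_pos_right (hAR u hu).1 hq₀.le
  have hnonneg : ∀ u, 0 ≤ F u := fun u => by
    rcases eq_or_ne u 0 with rfl | hu
    · simp [hF]
    · exact (hpos u hu).le
  obtain ⟨c, hc₀, hc⟩ := exists_pos_mul_abs_rpow_le_of_le_mul_deriv hderiv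
    (fun u hu => (hAR u hu).2) (hpos 1 one_ne_zero) (hpos (-1) (by norm_num))
  exact exists_neg_mul_sq_add_mul_rpow_le hq.le hnonneg hc hc₀ hε

theorem stmt_5 (f : ℝ → ℝ) (hf : Continuous f)
    (hsmall : Filter.Tendsto (fun u : ℝ => |f u| / |u|) (nhdsWithin 0 {0}ᶜ) (nhds 0))
    (F : ℝ → ℝ) (hF : ∀ u, F u = ∫ s in (0:ℝ)..u, f s)
    (q : ℝ) (hq : 2 < q)
    (hAR : ∀ u : ℝ, u ≠ 0 → 0 < q * F u ∧ q * F u ≤ u * f u) :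
    ∀ ε > (0:ℝ), ∃ Cε > (0:ℝ), ∀ u : ℝ,
      F u ≥ -ε * |u| ^ 2 + Cε * |u| ^ q :=
  stmt_5_general f hf F hF q hq hAR
end

section
/- Let f : ℝ → ℝ be C¹ and suppose there exists θ ∈ (0,1) such that 0 < f(u)/u ≤ θ·f'(u) for every u ≠ 0. Then with F(u) = ∫₀ᵘ f(s) ds, one has 0 < F(u) ≤ (θ/(1+θ))·f(u)·u for every u ≠ 0, and θ/(1+θ) < 1/2. -/
/-!
With `G u = θ u f(u) - (1 + θ) F(u)` one has `G' u = u (θ f'(u) - f(u)/u)`, which has the sign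
of `u`; hence `G` is minimal at `0`, where it vanishes, and this is the upper bound on `F`.
Likewise `F' = f` has the sign of `u`, so `F` has a strict minimum `F 0 = 0`.
-/

open Set

section SignChange

variable {G G' : ℝ → ℝ} {a : ℝ}

theorem isMinOn_univ_of_sub_mul_deriv_nonneg (hG : ∀ x, HasDerivAt G (G' x) x)
    (hsign : ∀ x, 0 ≤ (x - a) * G' x) : IsMinOn G univ a := by
  have hcont : Continuous G := continuous_iff_continuousAt.2 fun x ↦ (hG x).continuousAt
  intro u _
  rcases le_total a u with hau | hua
  · refine monotoneOn_of_hasDerivWithinAt_nonneg (convex_Icc a u) hcont.continuousOn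
      (fun x _ ↦ (hG x).hasDerivWithinAt) (fun x hx ↦ ?_) ⟨le_rfl, hau⟩ ⟨hau, le_rfl⟩ hau
    rw [interior_Icc] at hx
    exact nonneg_of_mul_nonneg_right (hsign x) (sub_pos.2 hx.1)
  · refine antitoneOn_of_hasDerivWithinAt_nonpos (convex_Icc u a) hcont.continuousOn
      (fun x _ ↦ (hG x).hasDerivWithinAt) (fun x hx ↦ ?_) ⟨le_rfl, hua⟩ ⟨hua, le_rfl⟩ hua
    rw [interior_Icc] at hx
    exact nonpos_of_mul_nonneg_right (hsign x) (sub_neg.2 hx.2)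

theorem lt_of_sub_mul_deriv_pos (hG : ∀ x, HasDerivAt G (G' x) x)
    (hsign : ∀ x, x ≠ a → 0 < (x - a) * G' x) {u : ℝ} (hu : u ≠ a) : G a < G u := by
  have hcont : Continuous G := continuous_iff_continuousAt.2 fun x ↦ (hG x).continuousAt
  rcases hu.lt_or_gt with hua | hau
  · refine strictAntiOn_of_hasDerivWithinAt_neg (convex_Icc u a) hcont.continuousOn
      (fun x _ ↦ (hG x).hasDerivWithinAt) (fun x hx ↦ ?_) ⟨le_rfl, hua.le⟩ ⟨hua.le, le_rfl⟩ hua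
    rw [interior_Icc] at hx
    exact neg_of_mul_pos_right (hsign x hx.2.ne) (sub_neg.2 hx.2).le
  · refine strictMonoOn_of_hasDerivWithinAt_pos (convex_Icc a u) hcont.continuousOn
      (fun x _ ↦ (hG x).hasDerivWithinAt) (fun x hx ↦ ?_) ⟨le_rfl, hau.le⟩ ⟨hau.le, le_rfl⟩ hau
    rw [interior_Icc] at hx
    exact pos_of_mul_pos_right (hsign x hx.1.ne') (sub_pos.2 hx.1).le

end SignChange

theorem mul_eq_sq_mul_div {x : ℝ} (hx : x ≠ 0) (y : ℝ) : x * y = x ^ 2 * (y / x) := by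
  field_simp

theorem stmt_7_general (f : ℝ → ℝ) (hf : ContDiff ℝ 1 f)
    (θ : ℝ) (hθ : θ ∈ Set.Ioo (0:ℝ) 1)
    (hcond : ∀ u : ℝ, u ≠ 0 → 0 < f u / u ∧ f u / u ≤ θ * deriv f u)
    (F : ℝ → ℝ) (hF : ∀ u, F u = ∫ s in (0:ℝ)..u, f s) :
    (∀ u : ℝ, u ≠ 0 → 0 < F u ∧ F u ≤ (θ / (1 + θ)) * (f u * u)) ∧
      θ / (1 + θ) < 1 / 2 := by
  obtain ⟨hθ0, hθ1⟩ := hθ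
  have hfd : Differentiable ℝ f := hf.differentiable one_ne_zero
  have hF' : ∀ x, HasDerivAt F (f x) x := by
    obtain rfl : F = fun u ↦ ∫ s in (0:ℝ)..u, f s := funext hF
    exact fun x ↦ (hfd.continuous.integral_hasStrictDerivAt 0 x).hasDerivAt
  have hF0 : F 0 = 0 := by simp [hF]
  have hG' : ∀ x, HasDerivAt (fun u ↦ θ * (u * f u) - (1 + θ) * F u)
      (θ * (1 * f x + x * deriv f x) - (1 + θ) * f x) x := fun x ↦
    (((hasDerivAt_id x).mul (hfd x).hasDerivAt).const_mul θ).sub ((hF' x).const_mul (1 + θ))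
  have hGmin := isMinOn_univ_of_sub_mul_deriv_nonneg (a := 0) hG' fun x ↦ by
    rcases eq_or_ne x 0 with rfl | hx
    · simp
    have hG'x : (θ * (1 * f x + x * deriv f x) - (1 + θ) * f x) / x = θ * deriv f x - f x / x := by
      field_simp; ring
    rw [sub_zero, mul_eq_sq_mul_div hx, hG'x]
    exact mul_nonneg (sq_nonneg x) (sub_nonneg.2 (hcond x hx).2)
  refine ⟨fun u hu ↦ ⟨?_, ?_⟩, ?_⟩
  · rw [← hF0]
    refine lt_of_sub_mul_deriv_pos hF' (fun x hx ↦ ?_) hu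
    rw [sub_zero, mul_eq_sq_mul_div hx]
    exact mul_pos (by positivity) (hcond x hx).1
  · have := isMinOn_iff.1 hGmin u (mem_univ u)
    simp only [hF0, mul_zero, zero_mul, sub_zero] at this
    rw [div_mul_eq_mul_div, le_div_iff₀ (by linarith)]
    linarith
  · rw [div_lt_div_iff₀ (by linarith) two_pos]
    linarith

theorem stmt_7 (f : ℝ → ℝ) (hf : ContDiff ℝ 1 f) (hf0 : f 0 = 0)
    (θ : ℝ) (hθ : θ ∈ Set.Ioo (0:ℝ) 1)
    (hcond : ∀ u : ℝ, u ≠ 0 → 0 < f u / u ∧ f u / u ≤ θ * deriv f u)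
    (F : ℝ → ℝ) (hF : ∀ u, F u = ∫ s in (0:ℝ)..u, f s) :
    (∀ u : ℝ, u ≠ 0 → 0 < F u ∧ F u ≤ (θ / (1 + θ)) * (f u * u)) ∧
      θ / (1 + θ) < 1 / 2 :=
  stmt_7_general f hf θ hθ hcond F hF
end

section
/- Let g : ℝ → ℝ be defined by g(u) = (1/2)f(u)·u − F(u), where f is C¹ with f(0)=0, F(u) = ∫₀ᵘ f(s) ds, and there exists θ ∈ (0,1) with 0 < u⁻¹f(u) ≤ θf'(u) for all u ≠ 0. Then g(u) ≥ (1/2 − θ/(1+θ))·f(u)·u > 0 for all u ≠ 0, and g(0) = 0; in particular g is nonnegative. -/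
/-!
Set `h(u) = θ u f(u) - (1 + θ) F(u)`. Then `h(0) = 0` and `h'(u) = θ u f'(u) - f(u)` has the
sign of `u` by the hypothesis `u⁻¹ f(u) ≤ θ f'(u)`, so `h ≥ 0`, i.e.
`(1 + θ) F(u) ≤ θ f(u) u`. Hence `g(u) = f(u) u / 2 - F(u) ≥ (1/2 - θ/(1+θ)) f(u) u`, which is
positive because `θ < 1` and `f(u) u > 0`.
-/

open Set

theorem nonneg_of_hasDerivAt_of_mul_deriv_nonneg {h h' : ℝ → ℝ}
    (hd : ∀ x, HasDerivAt h (h' x) x) (h0 : h 0 = 0) (hsign : ∀ x ≠ 0, 0 ≤ x * h' x)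
    (u : ℝ) : 0 ≤ h u := by
  have hcont : Continuous h := continuous_iff_continuousAt.2 fun x => (hd x).continuousAt
  rcases le_total 0 u with hu | hu
  · have hmono : MonotoneOn h (Ici 0) :=
      monotoneOn_of_hasDerivWithinAt_nonneg (convex_Ici 0) hcont.continuousOn
        (fun x _ => (hd x).hasDerivWithinAt) fun x hx => by
          rw [interior_Ici] at hx
          exact nonneg_of_mul_nonneg_right (hsign x hx.ne') hx
    simpa [h0] using hmono self_mem_Ici hu hu
  · have hanti : AntitoneOn h (Iic 0) :=
      antitoneOn_of_hasDerivWithinAt_nonpos (convex_Iic 0) hcont.continuousOn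
        (fun x _ => (hd x).hasDerivWithinAt) fun x hx => by
          rw [interior_Iic] at hx
          exact nonpos_of_mul_nonneg_right (hsign x hx.ne) hx
    simpa [h0] using hanti hu self_mem_Iic hu

theorem one_add_mul_primitive_le {f F : ℝ → ℝ} {θ : ℝ} (hf : Differentiable ℝ f)
    (hF : ∀ x, HasDerivAt F (f x) x) (hF0 : F 0 = 0)
    (hcond : ∀ u ≠ 0, f u / u ≤ θ * deriv f u) (u : ℝ) :
    (1 + θ) * F u ≤ θ * (f u * u) := by
  have hd : ∀ x, HasDerivAt (fun u => θ * u * f u - (1 + θ) * F u)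
      (θ * x * deriv f x - f x) x := fun x => by
    refine ((((hasDerivAt_id x).const_mul θ).mul (hf x).hasDerivAt).sub
      ((hF x).const_mul (1 + θ))).congr_deriv ?_
    simp only [id_eq]
    ring
  have hsign : ∀ x ≠ 0, 0 ≤ x * (θ * x * deriv f x - f x) := fun x hx => by
    have key : x * (θ * x * deriv f x - f x) = x ^ 2 * (θ * deriv f x - f x / x) := by
      field_simp
    rw [key]
    exact mul_nonneg (sq_nonneg x) (sub_nonneg.2 (hcond x hx))
  have := nonneg_of_hasDerivAt_of_mul_deriv_nonneg hd (by simp [hF0]) hsign u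
  linarith

theorem half_sub_div_one_add_pos {θ : ℝ} (hθ₀ : -1 < θ) (hθ₁ : θ < 1) :
    0 < 1 / 2 - θ / (1 + θ) := by
  rw [sub_pos, div_lt_div_iff₀ (by linarith) two_pos]
  linarith

theorem stmt_17_general (f : ℝ → ℝ) (hf : ContDiff ℝ 1 f)
    (θ : ℝ) (hθ : θ ∈ Set.Ioo (0:ℝ) 1)
    (hcond : ∀ u : ℝ, u ≠ 0 → 0 < f u / u ∧ f u / u ≤ θ * deriv f u)
    (F : ℝ → ℝ) (hF : ∀ u, F u = ∫ s in (0:ℝ)..u, f s)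
    (g : ℝ → ℝ) (hg : ∀ u, g u = (1 / 2) * f u * u - F u) :
    (∀ u : ℝ, u ≠ 0 →
      g u ≥ (1 / 2 - θ / (1 + θ)) * (f u * u) ∧
      0 < (1 / 2 - θ / (1 + θ)) * (f u * u)) ∧
    g 0 = 0 ∧ (∀ u : ℝ, 0 ≤ g u) := by
  have hFeq : F = fun u => ∫ s in (0:ℝ)..u, f s := funext hF
  have hFderiv : ∀ x, HasDerivAt F (f x) x := fun x =>
    hFeq ▸ (hf.continuous.integral_hasStrictDerivAt 0 x).hasDerivAt
  have hF0 : F 0 = 0 := by simp [hF]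
  have hbound : ∀ u ≠ 0, g u ≥ (1 / 2 - θ / (1 + θ)) * (f u * u) ∧
      0 < (1 / 2 - θ / (1 + θ)) * (f u * u) := fun u hu => by
    have hfu : 0 < f u * u := mul_pos_iff.2 (div_pos_iff.1 (hcond u hu).1)
    have hFu : F u ≤ θ / (1 + θ) * (f u * u) := by
      rw [div_mul_eq_mul_div, le_div_iff₀ (by linarith [hθ.1])]
      linarith [one_add_mul_primitive_le (hf.differentiable one_ne_zero) hFderiv hF0
        (fun v hv => (hcond v hv).2) u]
    refine ⟨?_, mul_pos (half_sub_div_one_add_pos (by linarith [hθ.1]) hθ.2) hfu⟩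
    rw [hg]
    linarith
  have hg0 : g 0 = 0 := by simp [hg, hF0]
  refine ⟨hbound, hg0, fun u => ?_⟩
  rcases eq_or_ne u 0 with rfl | hu
  · exact hg0.ge
  · linarith [(hbound u hu).1, (hbound u hu).2]

theorem stmt_17 (f : ℝ → ℝ) (hf : ContDiff ℝ 1 f) (hf0 : f 0 = 0)
    (θ : ℝ) (hθ : θ ∈ Set.Ioo (0:ℝ) 1)
    (hcond : ∀ u : ℝ, u ≠ 0 → 0 < f u / u ∧ f u / u ≤ θ * deriv f u)
    (F : ℝ → ℝ) (hF : ∀ u, F u = ∫ s in (0:ℝ)..u, f s)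
    (g : ℝ → ℝ) (hg : ∀ u, g u = (1 / 2) * f u * u - F u) :
    (∀ u : ℝ, u ≠ 0 →
      g u ≥ (1 / 2 - θ / (1 + θ)) * (f u * u) ∧
      0 < (1 / 2 - θ / (1 + θ)) * (f u * u)) ∧
    g 0 = 0 ∧ (∀ u : ℝ, 0 ≤ g u) :=
  stmt_17_general f hf θ hθ hcond F hF g hg
end
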